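/- Let D = Σ_j D_{L_j} be a total dissipator on M_d(ℂ). Define Δ(x) := x − (tr x / d)·I, let D† be the adjoint of D with respect to the Hilbert–Schmidt inner product ⟨A, B⟩ = tr(A†B), let D̃ := Δ ∘ ((D + D†)/2) ∘ Δ, and set μ₂ := sup{ ⟨x, D̃(x)⟩ : x ∈ M_d(ℂ) Hermitian, tr x = 0, ‖x‖₂ = 1 }, where ‖x‖₂ = √(tr(x†x)) is the Frobenius norm. If μ₂ < 0, then for every time-dependent Hermitian Hamiltonian H (with continuous entries), every pair of solutions ρ, σ of the master equation for L_t = −i[H(t), ·] + D whose values at time s are density matrices satisfies ‖ρ(t) − σ(t)‖₂ ≤ e^{−|μ₂|·(t−s)}·‖ρ(s) − σ(s)‖₂ for all t ≥ s ≥ 0, and hence ‖ρ(t) − σ(t)‖₁ ≤ √d·e^{−|μ₂|·(t−s)}·‖ρ(s) − σ(s)‖₁. In particular, D is Hamiltonian-independently contractive with contraction rate at least |μ₂| and constant K = √d. -/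

import Mathlib

/-!
Write `z = ρ - σ`. It solves the same linear master equation, and its trace stays `0` since
every `L_t` annihilates traces. The Hamiltonian part is skew-adjoint for the Hilbert–Schmidt
inner product, so `d/dt ‖z‖₂² = 2 Re ⟨z, D z⟩`. Splitting `z = a + i b` into Hermitian traceless
parts, for which `Re ⟨a, D a⟩ = ⟨a, D̃ a⟩ ≤ μ₂ ‖a‖₂²`, and using that `D` preserves Hermiticity
(so the cross terms are purely imaginary) gives `d/dt ‖z‖₂² ≤ 2 μ₂ ‖z‖₂²`. Grönwall yields the
Frobenius bound, and `‖·‖₂ ≤ ‖·‖₁ ≤ √d ‖·‖₂` the trace-norm bound.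
-/

open scoped ComplexOrder Kronecker
open Matrix

namespace Paper

variable {n : Type*} [Fintype n] [DecidableEq n]

/-- Trace norm: sum of singular values. -/
noncomputable def traceNorm (A : Matrix n n ℂ) : ℝ :=
  ∑ i, Real.sqrt ((Matrix.posSemidef_conjTranspose_mul_self A).isHermitian.eigenvalues i)

/-- The dissipator associated with a single jump operator. -/
noncomputable def dissipator (L x : Matrix n n ℂ) : Matrix n n ℂ :=
  L * x * Lᴴ - ((1 : ℂ)/2) • (Lᴴ * L * x + x * (Lᴴ * L))

/-- Total dissipator of a family of jump operators. -/
noncomputable def totalDissipator {m : ℕ} (L : Fin m → Matrix n n ℂ) (x : Matrix n n ℂ) :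
    Matrix n n ℂ :=
  ∑ j, dissipator (L j) x

/-- The Hamiltonian commutator term `-i[H, x]`. -/
noncomputable def hamTerm (H x : Matrix n n ℂ) : Matrix n n ℂ :=
  (-Complex.I) • (H * x - x * H)

/-- A solution of the master equation `ρ' = L_t(ρ)` starting at time `s`
(differentiable entrywise). -/
def IsSolution (Lt : ℝ → Matrix n n ℂ → Matrix n n ℂ) (s : ℝ) (ρ : ℝ → Matrix n n ℂ) : Prop :=
  ∀ t, s ≤ t → ∀ i j, HasDerivAt (fun u => ρ u i j) ((Lt t (ρ t)) i j) t

/-- Density matrix: Hermitian, positive semidefinite, trace one. -/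
def IsDensity (ρ : Matrix n n ℂ) : Prop := ρ.PosSemidef ∧ ρ.trace = 1

/-- Exponential contractivity with constants `K, γ` of a time-dependent Lindbladian. -/
def ExpContractiveWith (Lt : ℝ → Matrix n n ℂ → Matrix n n ℂ) (K γ : ℝ) : Prop :=
  ∀ s t : ℝ, 0 ≤ s → s ≤ t → ∀ ρ σ : ℝ → Matrix n n ℂ,
    IsSolution Lt s ρ → IsSolution Lt s σ → IsDensity (ρ s) → IsDensity (σ s) →
    traceNorm (ρ t - σ t) ≤ K * Real.exp (-γ * (t - s)) * traceNorm (ρ s - σ s)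

/-- Exponential contractivity of a time-dependent Lindbladian. -/
def ExpContractive (Lt : ℝ → Matrix n n ℂ → Matrix n n ℂ) : Prop :=
  ∃ K γ : ℝ, 0 < K ∧ 0 < γ ∧ ExpContractiveWith Lt K γ

/-- Time-dependent Hamiltonian: Hermitian values and continuous entries. -/
def IsHamiltonianFamily (H : ℝ → Matrix n n ℂ) : Prop :=
  (∀ t, (H t).IsHermitian) ∧ ∀ i j, Continuous fun t => H t i j

/-- Driven Lindbladian `x ↦ -i[H(t), x] + D(x)`. -/
noncomputable def driven {m : ℕ} (H : ℝ → Matrix n n ℂ) (L : Fin m → Matrix n n ℂ)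
    (t : ℝ) (x : Matrix n n ℂ) : Matrix n n ℂ :=
  hamTerm (H t) x + totalDissipator L x

/-- Hamiltonian-independent contractivity of a dissipator. -/
def HamIndepContractive {m : ℕ} (L : Fin m → Matrix n n ℂ) : Prop :=
  ∀ H : ℝ → Matrix n n ℂ, IsHamiltonianFamily H → ExpContractive (driven H L)

/-- The operator norm (largest singular value). -/
noncomputable def opNorm (A : Matrix n n ℂ) : ℝ :=
  ‖LinearMap.toContinuousLinearMap (Matrix.toEuclideanLin A)‖

end Paper

namespace Paper

/-- `Δ(x) = x - (tr x / d)·I`. -/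
noncomputable def deltaOp {d : ℕ} (x : Matrix (Fin d) (Fin d) ℂ) : Matrix (Fin d) (Fin d) ℂ :=
  x - (x.trace / (d : ℂ)) • (1 : Matrix (Fin d) (Fin d) ℂ)

/-- Hilbert–Schmidt inner product `⟨A, B⟩ = tr(A† B)`. -/
noncomputable def hsInner {d : ℕ} (A B : Matrix (Fin d) (Fin d) ℂ) : ℂ := (Aᴴ * B).trace

/-- Frobenius (Hilbert–Schmidt) norm `‖A‖₂ = √(tr(A†A))`. -/
noncomputable def frobNorm {d : ℕ} (A : Matrix (Fin d) (Fin d) ℂ) : ℝ :=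
  Real.sqrt ((Aᴴ * A).trace.re)

section Lindbladian

variable {n : Type*} [Fintype n]

lemma dissipator_add (L x y : Matrix n n ℂ) :
    dissipator L (x + y) = dissipator L x + dissipator L y := by
  simp only [dissipator, mul_add, add_mul]
  module

lemma dissipator_smul (L : Matrix n n ℂ) (c : ℂ) (x : Matrix n n ℂ) :
    dissipator L (c • x) = c • dissipator L x := by
  simp only [dissipator, mul_smul_comm, smul_mul_assoc]
  module

noncomputable def totalDissipatorLinearMap {m : ℕ} (L : Fin m → Matrix n n ℂ) :
    Matrix n n ℂ →ₗ[ℂ] Matrix n n ℂ where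
  toFun := totalDissipator L
  map_add' x y := by simp only [totalDissipator, dissipator_add, Finset.sum_add_distrib]
  map_smul' c x := by
    simp only [totalDissipator, dissipator_smul, Finset.smul_sum, RingHom.id_apply]

@[simp] lemma totalDissipatorLinearMap_apply {m : ℕ} (L : Fin m → Matrix n n ℂ)
    (x : Matrix n n ℂ) :
    totalDissipatorLinearMap L x = totalDissipator L x := rfl

lemma conjTranspose_dissipator (L x : Matrix n n ℂ) :
    (dissipator L x)ᴴ = dissipator L xᴴ := by
  have : star ((1 : ℂ) / 2) = 1 / 2 := by norm_num
  simp only [dissipator, conjTranspose_sub, conjTranspose_smul, conjTranspose_add,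
    conjTranspose_mul, conjTranspose_conjTranspose, this, mul_assoc, add_comm]

lemma conjTranspose_totalDissipator {m : ℕ} (L : Fin m → Matrix n n ℂ) (x : Matrix n n ℂ) :
    (totalDissipator L x)ᴴ = totalDissipator L xᴴ := by
  simp only [totalDissipator, conjTranspose_sum, conjTranspose_dissipator]

lemma trace_dissipator (L x : Matrix n n ℂ) : (dissipator L x).trace = 0 := by
  rw [dissipator, trace_sub, trace_smul, trace_add, trace_mul_cycle, trace_mul_comm x]
  ring

lemma trace_hamTerm (H x : Matrix n n ℂ) : (hamTerm H x).trace = 0 := by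
  rw [hamTerm, trace_smul, trace_sub, trace_mul_comm, sub_self, smul_zero]

lemma trace_driven {m : ℕ} (H : ℝ → Matrix n n ℂ) (L : Fin m → Matrix n n ℂ) (t : ℝ)
    (x : Matrix n n ℂ) : (driven H L t x).trace = 0 := by
  simp [driven, totalDissipator, trace_hamTerm, trace_dissipator, trace_sum]

lemma driven_sub {m : ℕ} (H : ℝ → Matrix n n ℂ) (L : Fin m → Matrix n n ℂ) (t : ℝ)
    (x y : Matrix n n ℂ) : driven H L t (x - y) = driven H L t x - driven H L t y := by
  have hD := map_sub (totalDissipatorLinearMap L) x y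
  simp only [totalDissipatorLinearMap_apply] at hD
  simp only [driven, hamTerm, hD, mul_sub, sub_mul]
  module

end Lindbladian

section Solutions

variable {n : Type*} {Lt : ℝ → Matrix n n ℂ → Matrix n n ℂ} {s : ℝ}
  {ρ σ : ℝ → Matrix n n ℂ}

lemma IsSolution.sub (hLt : ∀ t x y, Lt t (x - y) = Lt t x - Lt t y)
    (hρ : IsSolution Lt s ρ) (hσ : IsSolution Lt s σ) : IsSolution Lt s (ρ - σ) := by
  intro t ht i j
  rw [Pi.sub_apply, hLt]
  exact (hρ t ht i j).sub (hσ t ht i j)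

lemma IsSolution.trace_eq [Fintype n] (hLt : ∀ t x, (Lt t x).trace = 0) (hρ : IsSolution Lt s ρ)
    {t : ℝ} (ht : s ≤ t) : (ρ t).trace = (ρ s).trace := by
  have hderiv : ∀ u, s ≤ u → HasDerivAt (fun u => (ρ u).trace) 0 u := fun u hu => by
    simpa [Matrix.trace, ← hLt u (ρ u)] using HasDerivAt.fun_sum fun i _ => hρ u hu i i
  exact constant_of_has_deriv_right_zero
    (fun u hu => (hderiv u hu.1).continuousAt.continuousWithinAt)
    (fun u hu => (hderiv u hu.1).hasDerivWithinAt) t ⟨ht, le_rfl⟩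

end Solutions

theorem le_mul_exp_of_hasDerivAt_le_mul {f f' : ℝ → ℝ} {c s t : ℝ}
    (hf : ∀ u, s ≤ u → HasDerivAt f (f' u) u) (hf' : ∀ u, s ≤ u → f' u ≤ c * f u)
    (ht : s ≤ t) : f t ≤ f s * Real.exp (c * (t - s)) := by
  have h := le_gronwallBound_of_liminf_deriv_right_le (ε := 0)
    (fun u hu => (hf u hu.1).continuousAt.continuousWithinAt)
    (fun u hu _ hr => (hf u hu.1).hasDerivWithinAt.liminf_right_slope_le hr)
    le_rfl (fun u hu => by simpa using hf' u hu.1) t ⟨ht, le_rfl⟩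
  rwa [gronwallBound_ε0] at h

section HilbertSchmidt

variable {d : ℕ}

lemma hsInner_add_right (A B C : Matrix (Fin d) (Fin d) ℂ) :
    hsInner A (B + C) = hsInner A B + hsInner A C := by
  rw [hsInner, hsInner, hsInner, Matrix.mul_add, trace_add]

lemma hsInner_sub_right (A B C : Matrix (Fin d) (Fin d) ℂ) :
    hsInner A (B - C) = hsInner A B - hsInner A C := by
  rw [hsInner, hsInner, hsInner, Matrix.mul_sub, trace_sub]

lemma hsInner_add_left (A B C : Matrix (Fin d) (Fin d) ℂ) :
    hsInner (A + B) C = hsInner A C + hsInner B C := by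
  rw [hsInner, hsInner, hsInner, conjTranspose_add, Matrix.add_mul, trace_add]

lemma hsInner_smul_right (c : ℂ) (A B : Matrix (Fin d) (Fin d) ℂ) :
    hsInner A (c • B) = c * hsInner A B := by
  rw [hsInner, hsInner, mul_smul_comm, trace_smul, smul_eq_mul]

lemma hsInner_smul_left (c : ℂ) (A B : Matrix (Fin d) (Fin d) ℂ) :
    hsInner (c • A) B = star c * hsInner A B := by
  rw [hsInner, hsInner, conjTranspose_smul, smul_mul_assoc, trace_smul, smul_eq_mul]

lemma star_hsInner (A B : Matrix (Fin d) (Fin d) ℂ) : star (hsInner A B) = hsInner B A := by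
  rw [hsInner, hsInner, ← trace_conjTranspose, conjTranspose_mul, conjTranspose_conjTranspose]

lemma im_hsInner_eq_zero {A B : Matrix (Fin d) (Fin d) ℂ} (hA : A.IsHermitian)
    (hB : B.IsHermitian) : (hsInner A B).im = 0 := by
  refine Complex.conj_eq_iff_im.mp ?_
  rw [← Complex.star_def, star_hsInner, hsInner, hsInner, hA.eq, hB.eq, trace_mul_comm]

lemma re_hsInner_self_pos {A : Matrix (Fin d) (Fin d) ℂ} (hA : A ≠ 0) : 0 < (hsInner A A).re :=
  (Complex.pos_iff.mp <| (posSemidef_conjTranspose_mul_self A).trace_nonneg.lt_of_ne'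
    (trace_conjTranspose_mul_self_eq_zero_iff.not.mpr hA)).1

lemma frobNorm_nonneg (A : Matrix (Fin d) (Fin d) ℂ) : 0 ≤ frobNorm A := Real.sqrt_nonneg _

lemma frobNorm_sq (A : Matrix (Fin d) (Fin d) ℂ) : frobNorm A ^ 2 = (hsInner A A).re :=
  Real.sq_sqrt (Complex.nonneg_iff.mp (posSemidef_conjTranspose_mul_self A).trace_nonneg).1

lemma hasDerivAt_hsInner {x y : ℝ → Matrix (Fin d) (Fin d) ℂ}
    {x' y' : Matrix (Fin d) (Fin d) ℂ} {t : ℝ}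
    (hx : ∀ i j, HasDerivAt (fun u => x u i j) (x' i j) t)
    (hy : ∀ i j, HasDerivAt (fun u => y u i j) (y' i j) t) :
    HasDerivAt (fun u => hsInner (x u) (y u)) (hsInner x' (y t) + hsInner (x t) y') t := by
  simp only [hsInner, Matrix.trace, Matrix.diag, Matrix.mul_apply, Matrix.conjTranspose_apply,
    ← Finset.sum_add_distrib]
  exact HasDerivAt.fun_sum fun i _ => HasDerivAt.fun_sum fun j _ => (hx j i).star.mul (hy j i)

lemma hasDerivAt_re_hsInner_self {x : ℝ → Matrix (Fin d) (Fin d) ℂ}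
    {x' : Matrix (Fin d) (Fin d) ℂ} {t : ℝ} (hx : ∀ i j, HasDerivAt (fun u => x u i j) (x' i j) t) :
    HasDerivAt (fun u => (hsInner (x u) (x u)).re) (2 * (hsInner (x t) x').re) t := by
  have h := Complex.reCLM.hasFDerivAt.comp_hasDerivAt t (hasDerivAt_hsInner hx hx)
  simp only [Function.comp_def, Complex.reCLM_apply, Complex.add_re] at h
  rwa [← star_hsInner (x t) x', Complex.star_def, Complex.conj_re, ← two_mul] at h

theorem IsSolution.frobNorm_le
    {Lt : ℝ → Matrix (Fin d) (Fin d) ℂ → Matrix (Fin d) (Fin d) ℂ} {s c t : ℝ}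
    {z : ℝ → Matrix (Fin d) (Fin d) ℂ} (hz : IsSolution Lt s z)
    (hc : ∀ u, s ≤ u → (hsInner (z u) (Lt u (z u))).re ≤ c * (hsInner (z u) (z u)).re)
    (ht : s ≤ t) : frobNorm (z t) ≤ Real.exp (c * (t - s)) * frobNorm (z s) := by
  have hsq := le_mul_exp_of_hasDerivAt_le_mul (c := 2 * c)
    (fun u hu => hasDerivAt_re_hsInner_self (hz u hu)) (fun u hu => by linarith [hc u hu]) ht
  have hexp : Real.exp (2 * c * (t - s)) = Real.exp (c * (t - s)) ^ 2 := by
    rw [← Real.exp_nat_mul]; ring_nf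
  refine (sq_le_sq₀ (frobNorm_nonneg _)
    (mul_nonneg (Real.exp_pos _).le (frobNorm_nonneg _))).mp ?_
  rw [mul_pow, frobNorm_sq, frobNorm_sq, ← hexp]
  linarith

lemma re_hsInner_apply_add_I_smul
    (T : Matrix (Fin d) (Fin d) ℂ →ₗ[ℂ] Matrix (Fin d) (Fin d) ℂ)
    (hT : ∀ x, (T x)ᴴ = T xᴴ) {a b : Matrix (Fin d) (Fin d) ℂ} (ha : a.IsHermitian)
    (hb : b.IsHermitian) :
    (hsInner (a + Complex.I • b) (T (a + Complex.I • b))).re =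
      (hsInner a (T a)).re + (hsInner b (T b)).re := by
  have hTa : (T a).IsHermitian := by rw [IsHermitian, hT, ha.eq]
  have hTb : (T b).IsHermitian := by rw [IsHermitian, hT, hb.eq]
  rw [map_add, map_smul, hsInner_add_left, hsInner_add_right, hsInner_add_right,
    hsInner_smul_left, hsInner_smul_left, hsInner_smul_right, hsInner_smul_right]
  simp [Complex.mul_re, im_hsInner_eq_zero ha hTb, im_hsInner_eq_zero hb hTa]

lemma re_hsInner_hamTerm {H : Matrix (Fin d) (Fin d) ℂ} (hH : H.IsHermitian)
    (z : Matrix (Fin d) (Fin d) ℂ) : (hsInner z (hamTerm H z)).re = 0 := by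
  have h₁ : hsInner z (H * z) = hsInner H (z * zᴴ) := by
    rw [hsInner, hsInner, hH.eq, trace_mul_comm, Matrix.mul_assoc]
  have h₂ : hsInner z (z * H) = hsInner (zᴴ * z) H := by
    rw [hsInner, hsInner, conjTranspose_mul, conjTranspose_conjTranspose, Matrix.mul_assoc]
  have hzz : (z * zᴴ).IsHermitian := isHermitian_mul_conjTranspose_self z
  have hzz' : (zᴴ * z).IsHermitian := isHermitian_conjTranspose_mul_self z
  rw [hamTerm, hsInner_smul_right, hsInner_sub_right, h₁, h₂]
  simp [Complex.mul_re, im_hsInner_eq_zero hH hzz, im_hsInner_eq_zero hzz' hH]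

lemma re_hsInner_driven {m : ℕ} {H : ℝ → Matrix (Fin d) (Fin d) ℂ}
    (L : Fin m → Matrix (Fin d) (Fin d) ℂ) {t : ℝ} (hH : (H t).IsHermitian)
    (z : Matrix (Fin d) (Fin d) ℂ) :
    (hsInner z (driven H L t z)).re = (hsInner z (totalDissipator L z)).re := by
  rw [driven, hsInner_add_right, Complex.add_re, re_hsInner_hamTerm hH, zero_add]

end HilbertSchmidt

section Rayleigh

variable {d m : ℕ} (L : Fin m → Matrix (Fin d) (Fin d) ℂ)
  (Dadj : Matrix (Fin d) (Fin d) ℂ → Matrix (Fin d) (Fin d) ℂ)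

/-- The operator `D̃ = Δ ∘ ((D + D†)/2) ∘ Δ`. -/
noncomputable def symmetrizedDissipator (x : Matrix (Fin d) (Fin d) ℂ) :
    Matrix (Fin d) (Fin d) ℂ :=
  deltaOp (((1 : ℂ)/2) • (totalDissipator L (deltaOp x) + Dadj (deltaOp x)))

/-- `μ₂ = sSup (rayleighValues L Dadj)`. -/
def rayleighValues : Set ℝ :=
  { r | ∃ x : Matrix (Fin d) (Fin d) ℂ, x.IsHermitian ∧ x.trace = 0 ∧ frobNorm x = 1 ∧
    r = (hsInner x (symmetrizedDissipator L Dadj x)).re }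

variable {L Dadj}

lemma deltaOp_of_trace_eq_zero {x : Matrix (Fin d) (Fin d) ℂ} (hx : x.trace = 0) :
    deltaOp x = x := by
  rw [deltaOp, hx, zero_div, zero_smul, sub_zero]

lemma hsInner_deltaOp_right {x : Matrix (Fin d) (Fin d) ℂ} (hx : x.trace = 0)
    (y : Matrix (Fin d) (Fin d) ℂ) : hsInner x (deltaOp y) = hsInner x y := by
  have h1 : hsInner x 1 = 0 := by rw [hsInner, Matrix.mul_one, trace_conjTranspose, hx, star_zero]
  rw [deltaOp, hsInner_sub_right, hsInner_smul_right, h1, mul_zero, sub_zero]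

lemma re_hsInner_symmetrizedDissipator
    (hadj : ∀ A B, hsInner A (totalDissipator L B) = hsInner (Dadj A) B)
    {x : Matrix (Fin d) (Fin d) ℂ} (hx : x.trace = 0) :
    (hsInner x (symmetrizedDissipator L Dadj x)).re = (hsInner x (totalDissipator L x)).re := by
  rw [symmetrizedDissipator, hsInner_deltaOp_right hx, deltaOp_of_trace_eq_zero hx,
    hsInner_smul_right, hsInner_add_right, ← star_hsInner (Dadj x), ← hadj]
  simp [Complex.mul_re]
  ring

lemma re_hsInner_totalDissipator_le_of_isHermitian
    (hadj : ∀ A B, hsInner A (totalDissipator L B) = hsInner (Dadj A) B)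
    (hbdd : BddAbove (rayleighValues L Dadj)) {x : Matrix (Fin d) (Fin d) ℂ}
    (hx : x.IsHermitian) (htr : x.trace = 0) :
    (hsInner x (totalDissipator L x)).re ≤ sSup (rayleighValues L Dadj) * (hsInner x x).re := by
  rcases eq_or_ne x 0 with rfl | hx0
  · simp [hsInner]
  have hq := re_hsInner_self_pos hx0
  set r : ℝ := (frobNorm x)⁻¹
  have hr : r ^ 2 * (hsInner x x).re = 1 := by
    rw [inv_pow, frobNorm_sq, inv_mul_cancel₀ hq.ne']
  have hscale : ∀ y, hsInner ((r : ℂ) • x) ((r : ℂ) • y) = ((r ^ 2 : ℝ) : ℂ) * hsInner x y := by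
    intro y
    rw [hsInner_smul_left, hsInner_smul_right, Complex.star_def, Complex.conj_ofReal]
    push_cast
    ring
  have hmem : r ^ 2 * (hsInner x (totalDissipator L x)).re ∈ rayleighValues L Dadj := by
    have htr' : ((r : ℂ) • x).trace = 0 := by rw [trace_smul, htr, smul_zero]
    refine ⟨(r : ℂ) • x, hx.smul (Complex.conj_ofReal r), htr', ?_, ?_⟩
    · rw [frobNorm, ← hsInner, hscale, Complex.re_ofReal_mul, hr, Real.sqrt_one]
    · rw [re_hsInner_symmetrizedDissipator hadj htr',
        ← totalDissipatorLinearMap_apply L ((r : ℂ) • x),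
        map_smul, totalDissipatorLinearMap_apply, hscale, Complex.re_ofReal_mul]
  calc (hsInner x (totalDissipator L x)).re
      = r ^ 2 * (hsInner x (totalDissipator L x)).re * (hsInner x x).re := by
        rw [mul_right_comm, hr, one_mul]
    _ ≤ sSup (rayleighValues L Dadj) * (hsInner x x).re := by
        gcongr
        exact le_csSup hbdd hmem

lemma re_hsInner_totalDissipator_le
    (hadj : ∀ A B, hsInner A (totalDissipator L B) = hsInner (Dadj A) B)
    (hbdd : BddAbove (rayleighValues L Dadj)) {z : Matrix (Fin d) (Fin d) ℂ}
    (htr : z.trace = 0) :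
    (hsInner z (totalDissipator L z)).re ≤ sSup (rayleighValues L Dadj) * (hsInner z z).re := by
  have hre : (realPart z : Matrix (Fin d) (Fin d) ℂ).trace = 0 := by
    simp [realPart_apply_coe, trace_smul, trace_add, star_eq_conjTranspose, htr]
  have him : (imaginaryPart z : Matrix (Fin d) (Fin d) ℂ).trace = 0 := by
    simp [imaginaryPart_apply_coe, trace_smul, trace_sub, star_eq_conjTranspose, htr]
  have hD := re_hsInner_apply_add_I_smul (totalDissipatorLinearMap L)
    (conjTranspose_totalDissipator L) (realPart z).2 (imaginaryPart z).2
  have hid := re_hsInner_apply_add_I_smul LinearMap.id (fun _ => rfl)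
    (realPart z).2 (imaginaryPart z).2
  simp only [totalDissipatorLinearMap_apply, LinearMap.id_apply] at hD hid
  rw [← realPart_add_I_smul_imaginaryPart z, hD, hid, mul_add]
  exact add_le_add
    (re_hsInner_totalDissipator_le_of_isHermitian hadj hbdd (realPart z).2 hre)
    (re_hsInner_totalDissipator_le_of_isHermitian hadj hbdd (imaginaryPart z).2 him)

end Rayleigh

section TraceNorm

variable {d : ℕ}

lemma frobNorm_eq_sqrt_sum_eigenvalues (A : Matrix (Fin d) (Fin d) ℂ) :
    frobNorm A = √(∑ i, (posSemidef_conjTranspose_mul_self A).isHermitian.eigenvalues i) := by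
  rw [frobNorm, (posSemidef_conjTranspose_mul_self A).isHermitian.trace_eq_sum_eigenvalues,
    Complex.re_sum]
  simp

lemma frobNorm_le_traceNorm (A : Matrix (Fin d) (Fin d) ℂ) : frobNorm A ≤ traceNorm A := by
  have hev := (posSemidef_conjTranspose_mul_self A).eigenvalues_nonneg
  rw [frobNorm_eq_sqrt_sum_eigenvalues, traceNorm,
    Real.sqrt_le_left (Finset.sum_nonneg fun i _ => Real.sqrt_nonneg _)]
  simpa [Real.sq_sqrt, hev] using
    Finset.sum_sq_le_sq_sum_of_nonneg (s := Finset.univ)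
      (f := fun i => √((posSemidef_conjTranspose_mul_self A).isHermitian.eigenvalues i))
      fun i _ => Real.sqrt_nonneg _

lemma traceNorm_le_sqrt_mul_frobNorm (A : Matrix (Fin d) (Fin d) ℂ) :
    traceNorm A ≤ √d * frobNorm A := by
  have hev := (posSemidef_conjTranspose_mul_self A).eigenvalues_nonneg
  rw [frobNorm_eq_sqrt_sum_eigenvalues, ← Real.sqrt_mul (Nat.cast_nonneg d), traceNorm,
    Real.le_sqrt (Finset.sum_nonneg fun i _ => Real.sqrt_nonneg _)
      (mul_nonneg (Nat.cast_nonneg d) (Finset.sum_nonneg fun i _ => hev i))]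
  simpa [Real.sq_sqrt, hev] using
    sq_sum_le_card_mul_sum_sq (s := Finset.univ)
      (f := fun i => √((posSemidef_conjTranspose_mul_self A).isHermitian.eigenvalues i))

lemma traceNorm_le_of_frobNorm_le {A B : Matrix (Fin d) (Fin d) ℂ} {c : ℝ} (hc : 0 ≤ c)
    (h : frobNorm A ≤ c * frobNorm B) : traceNorm A ≤ √d * c * traceNorm B :=
  calc traceNorm A ≤ √d * frobNorm A := traceNorm_le_sqrt_mul_frobNorm A
    _ ≤ √d * (c * frobNorm B) := by gcongr
    _ ≤ √d * (c * traceNorm B) := by gcongr; exact frobNorm_le_traceNorm B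
    _ = √d * c * traceNorm B := by ring

end TraceNorm

theorem frobNorm_sub_le_of_isSolution {d m : ℕ} {L : Fin m → Matrix (Fin d) (Fin d) ℂ}
    {Dadj : Matrix (Fin d) (Fin d) ℂ → Matrix (Fin d) (Fin d) ℂ}
    (hadj : ∀ A B, hsInner A (totalDissipator L B) = hsInner (Dadj A) B)
    (hbdd : BddAbove (rayleighValues L Dadj)) {H : ℝ → Matrix (Fin d) (Fin d) ℂ}
    (hH : ∀ t, (H t).IsHermitian) {s t : ℝ} {ρ σ : ℝ → Matrix (Fin d) (Fin d) ℂ}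
    (hρ : IsSolution (driven H L) s ρ) (hσ : IsSolution (driven H L) s σ)
    (htr : (ρ s).trace = (σ s).trace) (hst : s ≤ t) :
    frobNorm (ρ t - σ t) ≤
      Real.exp (sSup (rayleighValues L Dadj) * (t - s)) * frobNorm (ρ s - σ s) := by
  refine (hρ.sub (driven_sub H L) hσ).frobNorm_le (fun u hu => ?_) hst
  rw [re_hsInner_driven L (hH u)]
  refine re_hsInner_totalDissipator_le hadj hbdd ?_
  rw [Pi.sub_apply, trace_sub, hρ.trace_eq (trace_driven H L) hu,
    hσ.trace_eq (trace_driven H L) hu, htr, sub_self]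

/-- if the second largest eigenvalue `μ₂` of
`D̃ = Δ ∘ ((D + D†)/2) ∘ Δ` is negative, then the dissipator is
Hamiltonian-independently contractive with rate `|μ₂|` and constant `√d`. -/
theorem eigenvalue_condition_contractive {d m : ℕ}
    (L : Fin m → Matrix (Fin d) (Fin d) ℂ)
    (Dadj : Matrix (Fin d) (Fin d) ℂ → Matrix (Fin d) (Fin d) ℂ)
    -- `Dadj` is the adjoint of the total dissipator w.r.t. the HS inner product:
    (hadj : ∀ A B : Matrix (Fin d) (Fin d) ℂ,
      hsInner A (totalDissipator L B) = hsInner (Dadj A) B)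
    (μ2 : ℝ)
    (hμ2 : μ2 = sSup { r : ℝ | ∃ x : Matrix (Fin d) (Fin d) ℂ,
      x.IsHermitian ∧ x.trace = 0 ∧ frobNorm x = 1 ∧
      r = (hsInner x (deltaOp (((1 : ℂ)/2) •
        (totalDissipator L (deltaOp x) + Dadj (deltaOp x))))).re })
    (hneg : μ2 < 0) :
    (∀ H : ℝ → Matrix (Fin d) (Fin d) ℂ, IsHamiltonianFamily H →
      ∀ s t : ℝ, 0 ≤ s → s ≤ t → ∀ ρ σ : ℝ → Matrix (Fin d) (Fin d) ℂ,
        IsSolution (driven H L) s ρ → IsSolution (driven H L) s σ →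
        IsDensity (ρ s) → IsDensity (σ s) →
        frobNorm (ρ t - σ t) ≤ Real.exp (-|μ2| * (t - s)) * frobNorm (ρ s - σ s) ∧
        traceNorm (ρ t - σ t) ≤
          Real.sqrt d * Real.exp (-|μ2| * (t - s)) * traceNorm (ρ s - σ s)) ∧
    HamIndepContractive L := by
  have hμ : μ2 = sSup (rayleighValues L Dadj) := hμ2
  -- `sSup` of a set that is empty or unbounded above is `0`, which `hneg` rules out.
  have hbdd : BddAbove (rayleighValues L Dadj) := by
    by_contra h
    rw [hμ, Real.sSup_of_not_bddAbove h] at hneg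
    exact hneg.false
  have hd : 0 < d := by
    refine Nat.pos_of_ne_zero fun hd => ?_
    subst hd
    have hempty : rayleighValues L Dadj = ∅ :=
      Set.eq_empty_of_forall_notMem fun r ⟨x, _, _, hx, _⟩ => by simp [frobNorm] at hx
    rw [hμ, hempty, Real.sSup_empty] at hneg
    exact hneg.false
  have frob : ∀ {H s t ρ σ}, IsHamiltonianFamily H → IsSolution (driven H L) s ρ →
      IsSolution (driven H L) s σ → IsDensity (ρ s) → IsDensity (σ s) → s ≤ t →
      frobNorm (ρ t - σ t) ≤ Real.exp (-|μ2| * (t - s)) * frobNorm (ρ s - σ s) := by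
    intro H s t ρ σ hH hρ hσ hρs hσs hst
    rw [abs_of_neg hneg, neg_neg, hμ]
    exact frobNorm_sub_le_of_isSolution hadj hbdd hH.1 hρ hσ (hρs.2.trans hσs.2.symm) hst
  refine ⟨fun H hH s t _ hst ρ σ hρ hσ hρs hσs => ?_, fun H hH =>
    ⟨√d, |μ2|, Real.sqrt_pos.mpr (Nat.cast_pos.mpr hd), abs_pos.mpr hneg.ne,
      fun s t _ hst ρ σ hρ hσ hρs hσs => ?_⟩⟩
  · have h := frob hH hρ hσ hρs hσs hst
    exact ⟨h, traceNorm_le_of_frobNorm_le (Real.exp_pos _).le h⟩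
  · exact traceNorm_le_of_frobNorm_le (Real.exp_pos _).le (frob hH hρ hσ hρs hσs hst)

end Paper
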